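/- arXiv:1203.1707 — 2 statements merged into one kernel-verified Lean document; each statement's English description precedes it below -/
import Mathlib

section
/- Discrete fractional Cauchy–Lipschitz theorem (right case): Let d ≥ 1, B ∈ ℝ^d, and let F : ℝ^d × [a,b] → ℝ^d be continuous and satisfy ‖F(x₁,t) − F(x₂,t)‖ ≤ K ‖x₁ − x₂‖ for all x₁, x₂ ∈ ℝ^d and t ∈ [a,b], for some K ≥ 0 with h^α K < 1. Then there exists a unique P ∈ (ℝ^d)^{N+1} such that P_N = B and (ᶜΔ^α_+ P)_k = F(P_k, t_k) for every k = 0,…,N−1. -/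
/-!
Since `α_0 = 1` and `P_N = B`, the `k`-th equation of the scheme reads
`P_k = B - ∑_{r=1}^{N-k} α_r (P_{k+r} - B) + h^α F(P_k, t_k)`,
a fixed-point equation for `P_k` whose right-hand side involves only `P_{k+1}, …, P_N`.
For fixed `P_{k+1}, …, P_N` its map is a contraction with constant `h^α K < 1`, so `P_k` exists
and is unique by Banach's theorem; backward induction from `P_N = B` determines the whole solution.
-/

open Finset Filter
open scoped RealInnerProductSpace Topology

noncomputable section

/-- `ℝ^n` with the euclidean norm. -/
abbrev Euc (n : ℕ) : Type := EuclideanSpace ℝ (Fin n)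

/-- The Grünwald–Letnikov coefficients `α_r = (−α)(1−α)⋯(r−1−α)/r!`, with `α_0 = 1`. -/
def glCoef (α : ℝ) (r : ℕ) : ℝ :=
  (∏ i ∈ Finset.range r, ((i : ℝ) - α)) / (Nat.factorial r : ℝ)

/-- Left discrete fractional derivative `(Δ^α_− G)_k = h^{−α} ∑_{r=0}^{k} α_r G_{k−r}`. -/
def dMinus {n : ℕ} (α h : ℝ) (G : ℕ → Euc n) (k : ℕ) : Euc n :=
  (h ^ (-α)) • ∑ r ∈ Finset.range (k + 1), glCoef α r • G (k - r)

/-- Right discrete fractional derivative `(Δ^α_+ G)_k = h^{−α} ∑_{r=0}^{N−k} α_r G_{k+r}`. -/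
def dPlus {n : ℕ} (N : ℕ) (α h : ℝ) (G : ℕ → Euc n) (k : ℕ) : Euc n :=
  (h ^ (-α)) • ∑ r ∈ Finset.range (N - k + 1), glCoef α r • G (k + r)

/-- Left Caputo discrete fractional derivative `(ᶜΔ^α_− G)_k = h^{−α} ∑_{r=0}^{k} α_r (G_{k−r} − G_0)`. -/
def cdMinus {n : ℕ} (α h : ℝ) (G : ℕ → Euc n) (k : ℕ) : Euc n :=
  dMinus α h (fun j => G j - G 0) k

/-- Right Caputo discrete fractional derivative
`(ᶜΔ^α_+ G)_k = h^{−α} ∑_{r=0}^{N−k} α_r (G_{k+r} − G_N)`. -/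
def cdPlus {n : ℕ} (N : ℕ) (α h : ℝ) (G : ℕ → Euc n) (k : ℕ) : Euc n :=
  dPlus N α h (fun j => G j - G N) k

section BackwardRecursion

-- `R k G x`: `x` solves the equation at node `k` when the later nodes carry the values of `G`.
variable {X : Type*} {N : ℕ} {R : ℕ → (ℕ → X) → X → Prop}

theorem exists_backward_solution (B : X) (hR : ∀ k < N, ∀ G, ∃ x, R k G x)
    (hlocal : ∀ k < N, ∀ G G', Set.EqOn G G' (Set.Ioc k N) → ∀ x, R k G x → R k G' x) :
    ∃ P : ℕ → X, P N = B ∧ ∀ k < N, R k P (P k) := by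
  suffices h : ∀ m ≤ N, ∃ P : ℕ → X, P N = B ∧ ∀ k ∈ Set.Ico m N, R k P (P k) by
    simpa using h 0 N.zero_le
  intro m hm
  induction hm using Nat.decreasingInduction with
  | self => exact ⟨fun _ => B, rfl, by simp⟩
  | of_succ m hm ih =>
    obtain ⟨P, hPN, hP⟩ := ih
    obtain ⟨x, hx⟩ := hR m hm P
    have hagree : Set.EqOn P (Function.update P m x) (Set.Ioc m N) := fun j hj =>
      (Function.update_of_ne (ne_of_gt hj.1) x P).symm
    refine ⟨Function.update P m x, by rw [Function.update_of_ne hm.ne', hPN], ?_⟩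
    rintro k ⟨hmk, hkN⟩
    rcases hmk.eq_or_lt with rfl | hmk
    · simpa using hlocal m hm _ _ hagree x hx
    · rw [Function.update_of_ne hmk.ne']
      exact hlocal k hkN _ _ (hagree.mono (Set.Ioc_subset_Ioc_left hmk.le)) _ (hP k ⟨hmk, hkN⟩)

theorem backward_solution_unique (hR : ∀ k < N, ∀ G, ∀ x y, R k G x → R k G y → x = y)
    (hlocal : ∀ k < N, ∀ G G', Set.EqOn G G' (Set.Ioc k N) → ∀ x, R k G x → R k G' x)
    {P P' : ℕ → X} (hN : P N = P' N) (hP : ∀ k < N, R k P (P k))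
    (hP' : ∀ k < N, R k P' (P' k)) : ∀ k ≤ N, P k = P' k := by
  intro k hk
  suffices h : Set.EqOn P P' (Set.Icc k N) from h ⟨le_rfl, hk⟩
  induction hk using Nat.decreasingInduction with
  | self => simpa using hN
  | of_succ m hm ih =>
    have hagree : Set.EqOn P' P (Set.Ioc m N) := fun j hj => (ih ⟨hj.1, hj.2⟩).symm
    have hPm : P m = P' m := hR m hm P _ _ (hP m hm) (hlocal m hm P' P hagree _ (hP' m hm))
    rintro j ⟨hmj, hjN⟩
    rcases hmj.eq_or_lt with rfl | hmj
    · exact hPm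
    · exact ih ⟨hmj, hjN⟩

end BackwardRecursion

theorem add_mul_div_mem_Icc {a b : ℝ} (hab : a ≤ b) {k N : ℕ} (hk : k ≤ N) :
    a + k * ((b - a) / N) ∈ Set.Icc a b := by
  have hkN : (k : ℝ) / N ≤ 1 := div_le_one_of_le₀ (by exact_mod_cast hk) N.cast_nonneg
  have hk0 : 0 ≤ (k : ℝ) / N := by positivity
  rw [show (k : ℝ) * ((b - a) / N) = k / N * (b - a) by ring]
  constructor <;> nlinarith

theorem existsUnique_eq_add_smul {𝕜 E : Type*} [NormedField 𝕜] [NormedAddCommGroup E]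
    [NormedSpace 𝕜 E] [CompleteSpace E] {f : E → E} {K : NNReal} (hf : LipschitzWith K f)
    (c : E) {γ : 𝕜} (hγK : ‖γ‖₊ * K < 1) : ∃! x, x = c + γ • f x := by
  have hcontr : ContractingWith (‖γ‖₊ * K) fun x => c + γ • f x :=
    ⟨hγK, LipschitzWith.of_dist_le_mul fun x y => by
      simpa [dist_add_left] using ((lipschitzWith_smul γ).comp hf).dist_le_mul x y⟩
  exact ⟨_, (hcontr.fixedPoint_isFixedPt).symm, fun x hx => hcontr.fixedPoint_unique hx.symm⟩

def cdPlusTail {n : ℕ} (N : ℕ) (α : ℝ) (G : ℕ → Euc n) (k : ℕ) : Euc n :=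
  G N - ∑ r ∈ range (N - k), glCoef α (r + 1) • (G (k + (r + 1)) - G N)

theorem cdPlusTail_congr {n N : ℕ} {α : ℝ} {G G' : ℕ → Euc n} {k : ℕ} (hk : k < N)
    (hGG' : Set.EqOn G G' (Set.Ioc k N)) : cdPlusTail N α G k = cdPlusTail N α G' k := by
  have hN : G N = G' N := hGG' ⟨hk, le_rfl⟩
  unfold cdPlusTail
  refine congrArg₂ _ hN (sum_congr rfl fun r hr => ?_)
  rw [mem_range] at hr
  rw [hGG' ⟨by omega, by omega⟩, hN]

theorem glCoef_zero (α : ℝ) : glCoef α 0 = 1 := by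
  simp [glCoef]

theorem cdPlus_eq_smul_sub_cdPlusTail {n : ℕ} (N : ℕ) (α h : ℝ) (G : ℕ → Euc n) (k : ℕ) :
    cdPlus N α h G k = h ^ (-α) • (G k - cdPlusTail N α G k) := by
  rw [cdPlus, dPlus, cdPlusTail, sum_range_succ', glCoef_zero, one_smul, add_zero]
  congr 1
  abel

theorem cdPlus_eq_iff {n N : ℕ} {α h : ℝ} (hh : 0 < h) (G : ℕ → Euc n) (k : ℕ) (f : Euc n) :
    cdPlus N α h G k = f ↔ G k = cdPlusTail N α G k + h ^ α • f := by
  rw [cdPlus_eq_smul_sub_cdPlusTail, Real.rpow_neg hh.le,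
    inv_smul_eq_iff₀ (Real.rpow_pos_of_pos hh α).ne', sub_eq_iff_eq_add']

theorem discrete_fractional_cauchy_lipschitz_right_general
    (d N : ℕ) (hN : 1 ≤ N) (a b : ℝ) (hab : a < b)
    (α : ℝ) (B : Euc d)
    (F : Euc d → ℝ → Euc d)
    (K : ℝ) (hK : 0 ≤ K)
    (hLip : ∀ x₁ x₂ : Euc d, ∀ t ∈ Set.Icc a b, ‖F x₁ t - F x₂ t‖ ≤ K * ‖x₁ - x₂‖)
    (hKsmall : ((b - a) / (N : ℝ)) ^ α * K < 1) :
    ∃ P : ℕ → Euc d,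
      (P N = B ∧ ∀ k, k < N →
        cdPlus N α ((b - a) / (N : ℝ)) P k = F (P k) (a + (k : ℝ) * ((b - a) / (N : ℝ)))) ∧
      ∀ P' : ℕ → Euc d,
        (P' N = B ∧ ∀ k, k < N →
          cdPlus N α ((b - a) / (N : ℝ)) P' k = F (P' k) (a + (k : ℝ) * ((b - a) / (N : ℝ)))) →
        ∀ k ≤ N, P k = P' k := by
  set h := (b - a) / (N : ℝ)
  have hh : 0 < h := div_pos (sub_pos.2 hab) (by exact_mod_cast hN)
  let R : ℕ → (ℕ → Euc d) → Euc d → Prop := fun k G x =>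
    x = cdPlusTail N α G k + h ^ α • F x (a + (k : ℝ) * h)
  have hR : ∀ k < N, ∀ G, ∃! x, R k G x := fun k hk G =>
    existsUnique_eq_add_smul (K := ⟨K, hK⟩)
      (lipschitzWith_iff_norm_sub_le.2 fun x y => hLip x y _ (add_mul_div_mem_Icc hab.le hk.le)) _
      (by
        rw [← NNReal.coe_lt_one]
        change ‖h ^ α‖ * K < 1
        rwa [Real.norm_of_nonneg (by positivity)])
  have hlocal : ∀ k < N, ∀ G G', Set.EqOn G G' (Set.Ioc k N) → ∀ x, R k G x → R k G' x :=
    fun k hk G G' hGG' x hx => by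
      change x = _ at hx ⊢
      rwa [← cdPlusTail_congr hk hGG']
  obtain ⟨P, hPN, hP⟩ := exists_backward_solution B (fun k hk G => (hR k hk G).exists) hlocal
  refine ⟨P, ⟨hPN, fun k hk => (cdPlus_eq_iff hh P k _).2 (hP k hk)⟩, ?_⟩
  rintro P' ⟨hP'N, hP'⟩
  exact backward_solution_unique (fun k hk G _ _ => (hR k hk G).unique) hlocal (hPN.trans hP'N.symm)
    hP fun k hk => (cdPlus_eq_iff hh P' k _).1 (hP' k hk)

/-- **Discrete fractional Cauchy–Lipschitz theorem (right case).** -/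
theorem discrete_fractional_cauchy_lipschitz_right
    (d N : ℕ) (hd : 1 ≤ d) (hN : 1 ≤ N) (a b : ℝ) (hab : a < b)
    (α : ℝ) (hα : 0 < α) (hα1 : α ≤ 1) (B : Euc d)
    (F : Euc d → ℝ → Euc d)
    (hFcont : ContinuousOn (fun p : Euc d × ℝ => F p.1 p.2) (Set.univ ×ˢ Set.Icc a b))
    (K : ℝ) (hK : 0 ≤ K)
    (hLip : ∀ x₁ x₂ : Euc d, ∀ t ∈ Set.Icc a b, ‖F x₁ t - F x₂ t‖ ≤ K * ‖x₁ - x₂‖)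
    (hKsmall : ((b - a) / (N : ℝ)) ^ α * K < 1) :
    ∃ P : ℕ → Euc d,
      (P N = B ∧ ∀ k, k < N →
        cdPlus N α ((b - a) / (N : ℝ)) P k = F (P k) (a + (k : ℝ) * ((b - a) / (N : ℝ)))) ∧
      ∀ P' : ℕ → Euc d,
        (P' N = B ∧ ∀ k, k < N →
          cdPlus N α ((b - a) / (N : ℝ)) P' k = F (P' k) (a + (k : ℝ) * ((b - a) / (N : ℝ)))) →
        ∀ k ≤ N, P k = P' k :=
  discrete_fractional_cauchy_lipschitz_right_general d N hN a b hab α B F K hK hLip hKsmall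
end
end

section
/- Discrete fractional Noether's theorem: Let φ₁, φ₂, φ₃ be one-parameter groups of diffeomorphisms of ℝ^d, ℝ^m, ℝ^d respectively, and assume that the Hamiltonian H is ᶜΔ^α_−-invariant under (φ₁,φ₂,φ₃). Then for every solution (Q,U,P) of the shifted discrete fractional Pontryagin system (σPS), the quantity S_i = ∑_{r=1}^{N} ∑_{j=0}^{N−r+1} (A_r)_{i,j} (∂φ₁/∂s(0,Q_j) · P_{j+r−1}) is a discrete constant of motion, i.e. S_k = S_{k−1} for every k = 1,…,N. -/
open Finset Filter
open scoped RealInnerProductSpace Topology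

noncomputable section

/-- The Hamiltonian `H(x,v,w,t) = L(x,v,t) + w · f(x,v,t)` associated to the Lagrangian `L`
and the constraint function `f`. -/
def Ham {d m : ℕ} (L : Euc d → Euc m → ℝ → ℝ) (f : Euc d → Euc m → ℝ → Euc d)
    (x : Euc d) (v : Euc m) (w : Euc d) (t : ℝ) : ℝ :=
  L x v t + ⟪w, f x v t⟫

/-- The shifted discrete fractional Pontryagin system `(σPS)` associated to the Hamiltonian `H`:
`Q_0 = A`, `P_N = 0`, `(ᶜΔ^α_− Q)_k = ∂H/∂w(Q_k, U_k, P_{k−1}, t_k)` for `k = 1,…,N`,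
`(Δ^α_+ P)_k = ∂H/∂x(Q_{k+1}, U_{k+1}, P_k, t_{k+1})` for `k = 0,…,N−1`, and
`∂H/∂v(Q_k, U_k, P_{k−1}, t_k) = 0` for `k = 1,…,N`. -/
def SigmaPS {d m : ℕ} (N : ℕ) (α hstep a : ℝ) (A : Euc d)
    (H : Euc d → Euc m → Euc d → ℝ → ℝ)
    (Q : ℕ → Euc d) (U : ℕ → Euc m) (P : ℕ → Euc d) : Prop :=
  Q 0 = A ∧ P N = 0 ∧
  (∀ k, 1 ≤ k → k ≤ N →
    cdMinus α hstep Q k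
      = gradient (fun w => H (Q k) (U k) w (a + (k : ℝ) * hstep)) (P (k - 1))) ∧
  (∀ k, k < N →
    dPlus N α hstep P k
      = gradient (fun x => H x (U (k + 1)) (P k) (a + ((k : ℝ) + 1) * hstep)) (Q (k + 1))) ∧
  (∀ k, 1 ≤ k → k ≤ N →
    gradient (fun v => H (Q k) v (P (k - 1)) (a + (k : ℝ) * hstep)) (U k) = 0)

/-- A one-parameter group of diffeomorphisms of `ℝ^n`: a `C²` map `φ : ℝ × ℝ^n → ℝ^n` with
`φ(0,·) = id`, `φ(s,·) ∘ φ(s',·) = φ(s+s',·)`, each `φ(s,·)` being a diffeomorphism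
(its inverse `φ(−s,·)` is automatically `C²`, so we only record bijectivity). -/
def OneParamGroup {n : ℕ} (φ : ℝ → Euc n → Euc n) : Prop :=
  ContDiff ℝ 2 (fun p : ℝ × Euc n => φ p.1 p.2) ∧
  (∀ x, φ 0 x = x) ∧
  (∀ s s' x, φ s (φ s' x) = φ (s + s') x) ∧
  (∀ s, Function.Bijective (φ s))

/-- The Hamiltonian `H` is `ᶜΔ^α_−`-invariant under the action of the three one-parameter
groups of diffeomorphisms `(φ₁, φ₂, φ₃)`. -/
def CDeltaInvariant {d m : ℕ} (N : ℕ) (α hstep a : ℝ) (A : Euc d)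
    (H : Euc d → Euc m → Euc d → ℝ → ℝ)
    (φ₁ : ℝ → Euc d → Euc d) (φ₂ : ℝ → Euc m → Euc m) (φ₃ : ℝ → Euc d → Euc d) : Prop :=
  ∀ (Q : ℕ → Euc d) (U : ℕ → Euc m) (P : ℕ → Euc d),
    SigmaPS N α hstep a A H Q U P → ∀ s : ℝ, ∀ k, 1 ≤ k → k ≤ N →
      H (φ₁ s (Q k)) (φ₂ s (U k)) (φ₃ s (P (k - 1))) (a + (k : ℝ) * hstep)
        - ⟪φ₃ s (P (k - 1)), cdMinus α hstep (fun j => φ₁ s (Q j)) k⟫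
      = H (Q k) (U k) (P (k - 1)) (a + (k : ℝ) * hstep)
        - ⟪P (k - 1), cdMinus α hstep Q k⟫

/-- `β^α_r = ∑_{k=0}^{r} α_k`. -/
def betaCoef (α : ℝ) (r : ℕ) : ℝ := ∑ k ∈ Finset.range (r + 1), glCoef α k

/-- The matrix `B_r` (with indices `0,…,N`): `B_1 = Id` and, for `2 ≤ r ≤ N`,
`(B_r)_{i,j} = [1≤i≤N−1]·[1≤j≤N−r]·[0≤i−j≤r−1] − [j=0]·[r≤i]`. -/
def Bmat (N r i j : ℕ) : ℝ :=
  if r = 1 then (if i = j then 1 else 0)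
  else
    (if (1 ≤ i ∧ i + 1 ≤ N) ∧ (1 ≤ j ∧ j + r ≤ N) ∧ (j ≤ i ∧ i < j + r) then 1 else 0)
      - (if j = 0 ∧ r ≤ i then 1 else 0)

/-- The matrix `C_r`: `(C_r)_{i,j} = [r≤i]·[j=0]`. -/
def Cmat (r i j : ℕ) : ℝ := if r ≤ i ∧ j = 0 then 1 else 0

/-- The matrix `A_r = α_r B_r + β^α_r C_r`. -/
def Amat (α : ℝ) (N r i j : ℕ) : ℝ := glCoef α r * Bmat N r i j + betaCoef α r * Cmat r i j

/-- `S_i = ∑_{r=1}^{N} ∑_{j=0}^{N−r+1} (A_r)_{i,j} (G¹_j · G²_{j+r−1})`. -/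
def transferS {n : ℕ} (N : ℕ) (α : ℝ) (G1 G2 : ℕ → Euc n) (i : ℕ) : ℝ :=
  ∑ r ∈ Finset.Icc 1 N, ∑ j ∈ Finset.range (N - r + 2),
    Amat α N r i j * ⟪G1 j, G2 (j + r - 1)⟫

/-!
Put `X_j = ∂φ₁/∂s (0, Q_j)`. Differentiating the invariance identity at `s = 0` and substituting
(σPS) (the `∂H/∂w`-term cancels against the variation of `P_{k-1}`, `∂H/∂v` vanishes and `∂H/∂x` is
`Δ^α_+ P`) gives `⟨Δ^α_+ P_{k-1}, X_k⟩ = ⟨P_{k-1}, ᶜΔ^α_− X_k⟩`.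
On the other hand, row `k` minus row `k - 1` of `A_r` is `α_r (e_k - e_{k-r}) + β^α_r [r = k] e_0`,
so, as `P_N = 0`, `h^{-α} (S_k - S_{k-1})` is exactly the difference of these two pairings:
a discrete fractional summation by parts.
-/

lemma Bmat_succ_sub {N r j : ℕ} (k : ℕ) (hr : 1 ≤ r) (hj : j + r ≤ N) :
    Bmat N r (k + 1) j - Bmat N r k j
      = (if j = k + 1 then 1 else 0) - (if j + r = k + 1 then 1 else 0) := by
  unfold Bmat
  split_ifs <;> first | omega | ring

lemma Cmat_succ_sub (r k j : ℕ) :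
    Cmat r (k + 1) j - Cmat r k j = if j = 0 ∧ r = k + 1 then 1 else 0 := by
  unfold Cmat
  split_ifs <;> first | omega | ring

lemma Amat_succ_sub (α : ℝ) {N r j : ℕ} (k : ℕ) (hr : 1 ≤ r) (hj : j + r ≤ N) :
    Amat α N r (k + 1) j - Amat α N r k j
      = glCoef α r * ((if j = k + 1 then 1 else 0) - (if j + r = k + 1 then 1 else 0))
        + betaCoef α r * (if j = 0 ∧ r = k + 1 then 1 else 0) := by
  rw [← Bmat_succ_sub k hr hj, ← Cmat_succ_sub]
  unfold Amat
  ring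

/-- The last column `j = N - r + 1`, where `Amat_succ_sub` fails, only meets `T _ N`. -/
lemma sum_Amat_succ_sub_mul (α : ℝ) {N r k : ℕ} (hr : 1 ≤ r) (hrN : r ≤ N) (hk : k < N)
    {T : ℕ → ℕ → ℝ} (hT : ∀ i, T i N = 0) :
    ∑ j ∈ range (N - r + 2), (Amat α N r (k + 1) j - Amat α N r k j) * T j (j + r - 1)
      = (if k + 1 + r ≤ N then glCoef α r * T (k + 1) (k + r) else 0)
        - (if r ≤ k + 1 then glCoef α r * T (k + 1 - r) k else 0)
        + (if r = k + 1 then betaCoef α r * T 0 k else 0) := by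
  have hcol : ∀ j, j + r = k + 1 ↔ r ≤ k + 1 ∧ j = k + 1 - r := by omega
  rw [sum_range_succ, show N - r + 1 + r - 1 = N by omega, hT, mul_zero, add_zero,
    sum_congr rfl fun j hj => by rw [Amat_succ_sub α k hr (by rw [mem_range] at hj; omega)]]
  simp only [hcol, add_mul, mul_sub, sub_mul, mul_ite, ite_mul, mul_one, mul_zero, zero_mul,
    ite_and, sum_add_distrib, sum_sub_distrib, sum_ite_eq', sum_ite_irrel, sum_const_zero,
    mem_range]
  rw [show k + 1 + r - 1 = k + r by omega]
  split_ifs <;> first | (exfalso; omega) | simp_all [Nat.sub_add_cancel]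

lemma sum_Icc_one_ite_le {M : Type*} [AddCommGroup M] (g : ℕ → M) {n N : ℕ} (h : n ≤ N) :
    ∑ r ∈ Icc 1 N, (if r ≤ n then g r else 0) = ∑ r ∈ range (n + 1), g r - g 0 := by
  have hfilter : (Icc 1 N).filter (· ≤ n) = (range (n + 1)).erase 0 := by
    ext r
    simp only [mem_filter, mem_Icc, mem_erase, mem_range]
    omega
  rw [← sum_filter, hfilter, sum_erase_eq_sub (by simp)]

lemma sum_sum_Amat_mul_succ_sub (α : ℝ) {N k : ℕ} (hk : k < N) {T : ℕ → ℕ → ℝ}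
    (hT : ∀ i, T i N = 0) :
    (∑ r ∈ Icc 1 N, ∑ j ∈ range (N - r + 2), Amat α N r (k + 1) j * T j (j + r - 1))
      - ∑ r ∈ Icc 1 N, ∑ j ∈ range (N - r + 2), Amat α N r k j * T j (j + r - 1)
      = ∑ r ∈ range (N - k + 1), glCoef α r * T (k + 1) (k + r)
        - ∑ r ∈ range (k + 2), glCoef α r * (T (k + 1 - r) k - T 0 k) := by
  have hle : ∀ r, k + 1 + r ≤ N ↔ r ≤ N - (k + 1) := by omega
  simp only [← sum_sub_distrib, ← sub_mul]
  rw [sum_congr rfl fun r hr =>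
    sum_Amat_succ_sub_mul α (mem_Icc.mp hr).1 (mem_Icc.mp hr).2 hk hT]
  simp only [hle, sum_add_distrib, sum_sub_distrib, sum_ite_eq', mem_Icc]
  rw [sum_Icc_one_ite_le _ (Nat.sub_le N (k + 1)), sum_Icc_one_ite_le _ (show k + 1 ≤ N from hk),
    if_pos (by omega), show N - k + 1 = N - (k + 1) + 1 + 1 by omega,
    sum_range_succ _ (N - (k + 1) + 1), show k + (N - (k + 1) + 1) = N by omega, hT]
  simp only [mul_sub, sum_sub_distrib, ← sum_mul, Nat.sub_zero, add_zero]
  change _ = _ - (_ - betaCoef α (k + 1) * T 0 k)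
  ring

lemma rpow_mul_transferS_succ_sub {n N : ℕ} (α h : ℝ) {X P : ℕ → Euc n} (hP : P N = 0)
    {k : ℕ} (hk : k < N) :
    h ^ (-α) * (transferS N α X P (k + 1) - transferS N α X P k)
      = ⟪dPlus N α h P k, X (k + 1)⟫ - ⟪P k, cdMinus α h X (k + 1)⟫ := by
  rw [transferS, transferS,
    sum_sum_Amat_mul_succ_sub α hk (T := fun j l => ⟪X j, P l⟫) (by simp [hP])]
  simp only [dPlus, cdMinus, dMinus, real_inner_smul_left, real_inner_smul_right, sum_inner,
    inner_sum, inner_sub_right]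
  simp only [real_inner_comm]
  ring

section Calculus

variable {E F G : Type*} [NormedAddCommGroup E] [InnerProductSpace ℝ E] [CompleteSpace E]
  [NormedAddCommGroup F] [InnerProductSpace ℝ F] [CompleteSpace F]
  [NormedAddCommGroup G] [InnerProductSpace ℝ G] [CompleteSpace G]

lemma DifferentiableAt.hasDerivAt_comp₃ {Φ : E → F → G → ℝ} {γ₁ : ℝ → E} {γ₂ : ℝ → F}
    {γ₃ : ℝ → G} {X₁ : E} {X₂ : F} {X₃ : G} {s : ℝ}
    (hΦ : DifferentiableAt ℝ (fun p : E × F × G => Φ p.1 p.2.1 p.2.2) (γ₁ s, γ₂ s, γ₃ s))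
    (h₁ : HasDerivAt γ₁ X₁ s) (h₂ : HasDerivAt γ₂ X₂ s) (h₃ : HasDerivAt γ₃ X₃ s) :
    HasDerivAt (fun s => Φ (γ₁ s) (γ₂ s) (γ₃ s))
      (⟪gradient (fun x => Φ x (γ₂ s) (γ₃ s)) (γ₁ s), X₁⟫
        + ⟪gradient (fun v => Φ (γ₁ s) v (γ₃ s)) (γ₂ s), X₂⟫
        + ⟪gradient (fun w => Φ (γ₁ s) (γ₂ s) w) (γ₃ s), X₃⟫) s := by
  set D := fderiv ℝ (fun p : E × F × G => Φ p.1 p.2.1 p.2.2) (γ₁ s, γ₂ s, γ₃ s)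
  have hD : HasFDerivAt (fun p : E × F × G => Φ p.1 p.2.1 p.2.2) D (γ₁ s, γ₂ s, γ₃ s) :=
    hΦ.hasFDerivAt
  have hx : HasFDerivAt (fun x => Φ x (γ₂ s) (γ₃ s))
      (D.comp (ContinuousLinearMap.inl ℝ E (F × G))) (γ₁ s) :=
    (hD.comp (γ₁ s) (hasFDerivAt_prodMk_left (𝕜 := ℝ) (γ₁ s) (γ₂ s, γ₃ s)) :)
  have hv : HasFDerivAt (fun v => Φ (γ₁ s) v (γ₃ s))
      (D.comp ((ContinuousLinearMap.inr ℝ E (F × G)).comp (ContinuousLinearMap.inl ℝ F G)))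
      (γ₂ s) :=
    (hD.comp (γ₂ s) ((hasFDerivAt_prodMk_right (𝕜 := ℝ) (γ₁ s) (γ₂ s, γ₃ s)).comp (γ₂ s)
      (hasFDerivAt_prodMk_left (𝕜 := ℝ) (γ₂ s) (γ₃ s))) :)
  have hw : HasFDerivAt (fun w => Φ (γ₁ s) (γ₂ s) w)
      (D.comp ((ContinuousLinearMap.inr ℝ E (F × G)).comp (ContinuousLinearMap.inr ℝ F G)))
      (γ₃ s) :=
    (hD.comp (γ₃ s) ((hasFDerivAt_prodMk_right (𝕜 := ℝ) (γ₁ s) (γ₂ s, γ₃ s)).comp (γ₃ s)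
      (hasFDerivAt_prodMk_right (𝕜 := ℝ) (γ₂ s) (γ₃ s))) :)
  refine (hD.comp_hasDerivAt s (h₁.prodMk (h₂.prodMk h₃))).congr_deriv ?_
  rw [inner_gradient_left, inner_gradient_left, inner_gradient_left, hx.fderiv, hv.fderiv,
    hw.fderiv]
  simp only [ContinuousLinearMap.comp_apply, ContinuousLinearMap.inl_apply,
    ContinuousLinearMap.inr_apply, ← map_add, Prod.mk_add_mk, add_zero, zero_add]

end Calculus

lemma hasDerivAt_cdMinus {n : ℕ} {G : ℝ → ℕ → Euc n} {G' : ℕ → Euc n} {s : ℝ}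
    (hG : ∀ j, HasDerivAt (fun s => G s j) (G' j) s) (α h : ℝ) (k : ℕ) :
    HasDerivAt (fun s => cdMinus α h (G s) k) (cdMinus α h G' k) s := by
  have hsum := HasDerivAt.fun_sum (u := range (k + 1)) fun r _ =>
    ((hG (k - r)).sub (hG 0)).const_smul (glCoef α r)
  exact hsum.const_smul (h ^ (-α))

lemma OneParamGroup.apply_zero {n : ℕ} {φ : ℝ → Euc n → Euc n} (hφ : OneParamGroup φ)
    (x : Euc n) : φ 0 x = x :=
  hφ.2.1 x

lemma OneParamGroup.hasDerivAt {n : ℕ} {φ : ℝ → Euc n → Euc n} (hφ : OneParamGroup φ)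
    (x : Euc n) (s : ℝ) : HasDerivAt (fun s => φ s x) (deriv (fun s => φ s x) s) s :=
  ((hφ.1.differentiable two_ne_zero).comp (differentiable_id.prodMk (differentiable_const x))
    s).hasDerivAt

lemma differentiable_Ham {d m : ℕ} {L : Euc d → Euc m → ℝ → ℝ} {f : Euc d → Euc m → ℝ → Euc d}
    (hL : Differentiable ℝ fun p : Euc d × Euc m × ℝ => L p.1 p.2.1 p.2.2)
    (hf : Differentiable ℝ fun p : Euc d × Euc m × ℝ => f p.1 p.2.1 p.2.2) (t : ℝ) :
    Differentiable ℝ fun p : Euc d × Euc m × Euc d => Ham L f p.1 p.2.1 p.2.2 t := by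
  have hfreeze : Differentiable ℝ fun p : Euc d × Euc m × Euc d => (p.1, p.2.1, t) :=
    differentiable_fst.prodMk (differentiable_snd.fst.prodMk (differentiable_const t))
  exact (hL.comp hfreeze).add (differentiable_snd.snd.inner ℝ (hf.comp hfreeze))
lemma inner_dPlus_eq_inner_cdMinus_of_invariant {d m N : ℕ} {α h a : ℝ} {A : Euc d}
    {H : Euc d → Euc m → Euc d → ℝ → ℝ}
    (hH : ∀ t, Differentiable ℝ fun p : Euc d × Euc m × Euc d => H p.1 p.2.1 p.2.2 t)
    {φ₁ : ℝ → Euc d → Euc d} {φ₂ : ℝ → Euc m → Euc m} {φ₃ : ℝ → Euc d → Euc d}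
    (hφ₁ : OneParamGroup φ₁) (hφ₂ : OneParamGroup φ₂) (hφ₃ : OneParamGroup φ₃)
    (hinv : CDeltaInvariant N α h a A H φ₁ φ₂ φ₃)
    {Q : ℕ → Euc d} {U : ℕ → Euc m} {P : ℕ → Euc d} (hsol : SigmaPS N α h a A H Q U P)
    {k : ℕ} (hk : k < N) :
    ⟪dPlus N α h P k, deriv (fun s => φ₁ s (Q (k + 1))) 0⟫
      = ⟪P k, cdMinus α h (fun j => deriv (fun s => φ₁ s (Q j)) 0) (k + 1)⟫ := by
  have hHam := DifferentiableAt.hasDerivAt_comp₃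
    (Φ := fun x v w => H x v w (a + ((k + 1 : ℕ) : ℝ) * h)) (hH _ _)
    (hφ₁.hasDerivAt (Q (k + 1)) 0) (hφ₂.hasDerivAt (U (k + 1)) 0) (hφ₃.hasDerivAt (P k) 0)
  have hpair := (hφ₃.hasDerivAt (P k) 0).inner ℝ
    (hasDerivAt_cdMinus (fun j => hφ₁.hasDerivAt (Q j) 0) α h (k + 1))
  have hconst : (fun s => H (φ₁ s (Q (k + 1))) (φ₂ s (U (k + 1))) (φ₃ s (P k))
        (a + ((k + 1 : ℕ) : ℝ) * h) - ⟪φ₃ s (P k), cdMinus α h (fun j => φ₁ s (Q j)) (k + 1)⟫)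
      = fun _ => H (Q (k + 1)) (U (k + 1)) (P k) (a + ((k + 1 : ℕ) : ℝ) * h)
        - ⟪P k, cdMinus α h Q (k + 1)⟫ :=
    funext fun s => hinv Q U P hsol s (k + 1) k.succ_pos hk
  have hvariation := hHam.fun_sub hpair
  rw [hconst] at hvariation
  have hzero := hvariation.unique (hasDerivAt_const _ _)
  obtain ⟨-, -, hw, hx, hv⟩ := hsol
  have hw := hw (k + 1) k.succ_pos hk
  have hv := hv (k + 1) k.succ_pos hk
  simp only [hφ₁.apply_zero, hφ₂.apply_zero, hφ₃.apply_zero, Nat.add_sub_cancel,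
    Nat.cast_succ] at hzero hw hv
  rw [← hw, hv, ← hx k hk, inner_zero_left,
    real_inner_comm (deriv (fun s => φ₃ s (P k)) 0)] at hzero
  linarith

theorem discrete_fractional_noether_general
    (d m N : ℕ)
    (a b : ℝ) (hab : a < b) (α : ℝ)
    (A : Euc d)
    (f : Euc d → Euc m → ℝ → Euc d)
    (hf : ContDiff ℝ 2 fun p : Euc d × Euc m × ℝ => f p.1 p.2.1 p.2.2)
    (L : Euc d → Euc m → ℝ → ℝ)
    (hL : ContDiff ℝ 2 fun p : Euc d × Euc m × ℝ => L p.1 p.2.1 p.2.2)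
    (φ₁ : ℝ → Euc d → Euc d) (φ₂ : ℝ → Euc m → Euc m) (φ₃ : ℝ → Euc d → Euc d)
    (hφ₁ : OneParamGroup φ₁) (hφ₂ : OneParamGroup φ₂) (hφ₃ : OneParamGroup φ₃)
    (hinv : CDeltaInvariant N α ((b - a) / (N : ℝ)) a A (Ham L f) φ₁ φ₂ φ₃) :
    ∀ (Q : ℕ → Euc d) (U : ℕ → Euc m) (P : ℕ → Euc d),
      SigmaPS N α ((b - a) / (N : ℝ)) a A (Ham L f) Q U P →
      ∀ k, 1 ≤ k → k ≤ N →
        transferS N α (fun j => deriv (fun s => φ₁ s (Q j)) 0) P k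
          = transferS N α (fun j => deriv (fun s => φ₁ s (Q j)) 0) P (k - 1) := by
  intro Q U P hsol k hk1 hkN
  obtain ⟨k, rfl⟩ : ∃ k', k = k' + 1 := ⟨k - 1, by omega⟩
  have hstep : 0 < (b - a) / (N : ℝ) :=
    div_pos (sub_pos.mpr hab) (by exact_mod_cast hk1.trans hkN)
  have hH := differentiable_Ham (hL.differentiable two_ne_zero) (hf.differentiable two_ne_zero)
  have key := rpow_mul_transferS_succ_sub α ((b - a) / N)
    (X := fun j => deriv (fun s => φ₁ s (Q j)) 0) hsol.2.1 hkN
  rw [inner_dPlus_eq_inner_cdMinus_of_invariant hH hφ₁ hφ₂ hφ₃ hinv hsol hkN, sub_self,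
    mul_eq_zero] at key
  rw [Nat.add_sub_cancel]
  exact sub_eq_zero.mp (key.resolve_left (Real.rpow_pos_of_pos hstep _).ne')

/-- **Discrete fractional Noether's theorem.** -/
theorem discrete_fractional_noether
    (d m N : ℕ) (hd : 1 ≤ d) (hm : 1 ≤ m) (hN : 1 ≤ N)
    (a b : ℝ) (hab : a < b) (α : ℝ) (hα : 0 < α) (hα1 : α ≤ 1)
    (A : Euc d)
    (f : Euc d → Euc m → ℝ → Euc d)
    (hf : ContDiff ℝ 2 fun p : Euc d × Euc m × ℝ => f p.1 p.2.1 p.2.2)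
    (L : Euc d → Euc m → ℝ → ℝ)
    (hL : ContDiff ℝ 2 fun p : Euc d × Euc m × ℝ => L p.1 p.2.1 p.2.2)
    (φ₁ : ℝ → Euc d → Euc d) (φ₂ : ℝ → Euc m → Euc m) (φ₃ : ℝ → Euc d → Euc d)
    (hφ₁ : OneParamGroup φ₁) (hφ₂ : OneParamGroup φ₂) (hφ₃ : OneParamGroup φ₃)
    (hinv : CDeltaInvariant N α ((b - a) / (N : ℝ)) a A (Ham L f) φ₁ φ₂ φ₃) :
    ∀ (Q : ℕ → Euc d) (U : ℕ → Euc m) (P : ℕ → Euc d),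
      SigmaPS N α ((b - a) / (N : ℝ)) a A (Ham L f) Q U P →
      ∀ k, 1 ≤ k → k ≤ N →
        transferS N α (fun j => deriv (fun s => φ₁ s (Q j)) 0) P k
          = transferS N α (fun j => deriv (fun s => φ₁ s (Q j)) 0) P (k - 1) :=
  discrete_fractional_noether_general d m N a b hab α A f hf L hL φ₁ φ₂ φ₃ hφ₁ hφ₂ hφ₃ hinv
end
end
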